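/- arXiv:1307.2004 — 3 statements merged into one kernel-verified Lean document; each statement's English description precedes it below -/
import Mathlib

section
/- If A, B, C are bounded negative games and σ : A ⊸ B, τ : B ⊸ C are total strategies, then the composite τ ∘ σ (defined by parallel composition plus hiding) is a total strategy on A ⊸ C. -/
namespace WS

/-- The finite prefix of length `n` of an infinite sequence. -/
def pref {α : Type} (f : ℕ → α) (n : ℕ) : List α := List.ofFn fun i : Fin n => f i

/-- A game: moves, a labelling of moves (`true` = Player move), a starting player
(`true` = Player starts, `false` = Opponent starts), a set of valid finite plays,
and a set of P-winning infinite plays. -/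
structure Game where
  Move : Type
  lab : Move → Bool
  start : Bool
  plays : List Move → Prop
  win : (ℕ → Move) → Prop

/-- A sequence alternates, starting with a move of player `b`. -/
def altWith {M : Type} (lab : M → Bool) (b : Bool) (s : List M) : Prop :=
  ∀ (i : ℕ) (h : i < s.length), lab (s.get ⟨i, h⟩) = (b != decide (i % 2 = 1))

namespace Game

def alt (G : Game) : List G.Move → Prop := altWith G.lab G.start

/-- An infinite play: every finite prefix is a valid play. -/
def InfPlay (G : Game) (f : ℕ → G.Move) : Prop := ∀ n, G.plays (pref f n)

/-- The well-formedness conditions on a game: plays form a nonempty prefix-closed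
set of alternating sequences starting with the starting player, and the winning
infinite plays have all their finite prefixes valid. -/
structure Wellformed (G : Game) : Prop where
  nil_mem : G.plays []
  prefix_closed : ∀ s t : List G.Move, G.plays (s ++ t) → G.plays s
  alternating : ∀ s, G.plays s → G.alt s
  win_sub : ∀ f, G.win f → G.InfPlay f

def Negative (G : Game) : Prop := G.start = false
def Positive (G : Game) : Prop := G.start = true

/-- Negation of a game: swap the Player/Opponent labelling and starting player;
the P-winning infinite plays become the complement (within the infinite plays). -/
def neg (A : Game) : Game where
  Move := A.Move
  lab := fun m => !A.lab m
  start := !A.start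
  plays := A.plays
  win := fun f => A.InfPlay f ∧ ¬ A.win f

/-- A game is bounded if there is a uniform bound on the length of its plays. -/
def Bounded (G : Game) : Prop := ∃ k, ∀ s, G.plays s → s.length ≤ k

/-- `W*`-membership for a growing family `r` of finite restrictions of an infinite
play to a component: either the restriction is infinite and assembles to a
P-winning infinite play, or it is eventually a fixed finite play ending in a
P-move. -/
def WStar (M : Game) (r : ℕ → List M.Move) : Prop :=
  (∃ g : ℕ → M.Move,
      (∀ (n i : ℕ) (h : i < (r n).length), (r n).get ⟨i, h⟩ = g i) ∧
      (∀ k, ∃ n, k ≤ (r n).length) ∧ M.win g) ∨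
  (∃ (s : List M.Move) (a : M.Move),
      (∃ n, ∀ m, n ≤ m → r m = s ++ [a]) ∧ M.lab a = true)

end Game

/-- Restriction of a sequence of tagged moves to the left component. -/
def projL {α β : Type} (s : List (α ⊕ β)) : List α := s.filterMap Sum.getLeft?

/-- Restriction of a sequence of tagged moves to the right component. -/
def projR {α β : Type} (s : List (α ⊕ β)) : List β := s.filterMap Sum.getRight?

/-- Tensor of negative games: interleavings where only Opponent switches. -/
def tensor (M N : Game) : Game where
  Move := M.Move ⊕ N.Move
  lab := Sum.elim M.lab N.lab
  start := false
  plays := fun s => M.plays (projL s) ∧ N.plays (projR s) ∧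
    altWith (Sum.elim M.lab N.lab) false s
  win := fun f =>
    M.WStar (fun n => projL (pref f n)) ∧ N.WStar (fun n => projR (pref f n))

/-- Sequoid (left merge) `A ⊘ N`: interleavings whose first move, if any, is in `A`. -/
def sequoid (A N : Game) : Game where
  Move := A.Move ⊕ N.Move
  lab := Sum.elim A.lab N.lab
  start := A.start
  plays := fun s => A.plays (projL s) ∧ N.plays (projR s) ∧
    altWith (Sum.elim A.lab N.lab) A.start s ∧ (projL s = [] → projR s = [])
  win := fun f =>
    A.WStar (fun n => projL (pref f n)) ∧ N.WStar (fun n => projR (pref f n))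

/-- With `L & N`: Opponent's first move chooses a component and play stays there. -/
def withGame (L N : Game) : Game where
  Move := L.Move ⊕ N.Move
  lab := Sum.elim L.lab N.lab
  start := false
  plays := fun s => L.plays (projL s) ∧ N.plays (projR s) ∧
    (projL s = [] ∨ projR s = [])
  win := fun f =>
    (∃ g : ℕ → L.Move, (∀ n, f n = Sum.inl (g n)) ∧ L.win g) ∨
    (∃ g : ℕ → N.Move, (∀ n, f n = Sum.inr (g n)) ∧ N.win g)

/-- Restriction to the `i`-th copy. -/
def copyProj (N : Game) (i : ℕ) (s : List (N.Move × ℕ)) : List N.Move :=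
  s.filterMap fun m => if m.2 = i then some m.1 else none

/-- Exponential `!N`: countably many copies, opened in increasing order. -/
def bang (N : Game) : Game where
  Move := N.Move × ℕ
  lab := fun m => N.lab m.1
  start := false
  plays := fun s =>
    (∀ i, N.plays (copyProj N i s)) ∧
    (∀ i, copyProj N i s = [] → copyProj N (i + 1) s = []) ∧
    altWith (fun m => N.lab m.1) false s
  win := fun f => ∀ i, (Game.WStar N fun n => copyProj N i (pref f n))

/-- The one-move negative game `⊥`. -/
def botGame : Game where
  Move := PUnit
  lab := fun _ => false
  start := false
  plays := fun s => s = [] ∨ s = [PUnit.unit]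
  win := fun _ => False

/-- Affine implication `A ⊸ B` of negative games: an interleaving of a play of `B`
with a play of `A^⊥`, starting in `B`. -/
def linHom (A B : Game) : Game where
  Move := B.Move ⊕ A.Move
  lab := Sum.elim B.lab fun a => !A.lab a
  start := false
  plays := fun s => B.plays (projL s) ∧ A.plays (projR s) ∧
    altWith (Sum.elim B.lab fun a => !A.lab a) false s ∧
    (projL s = [] → projR s = [])
  win := fun f =>
    B.WStar (fun n => projL (pref f n)) ∨
    (Game.neg A).WStar (fun n => projR (pref f n))

/-- A set of plays is a strategy for Player. -/
def IsStrategy (G : Game) (S : Set (List G.Move)) : Prop :=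
  (∀ s ∈ S, G.plays s) ∧
  (∀ (s : List G.Move) (a : G.Move), s ++ [a] ∈ S → G.lab a = true) ∧
  (∀ (s : List G.Move) (a b : G.Move), s ++ [a, b] ∈ S → s ∈ S) ∧
  (∀ (s : List G.Move) (a b : G.Move), s ++ [a] ∈ S → s ++ [b] ∈ S → a = b) ∧
  (S = ∅ → G.start = true) ∧
  (([] : List G.Move) ∈ S → G.start = false)

/-- A strategy is total if it is nonempty and responds to every Opponent extension. -/
def IsTotal (G : Game) (S : Set (List G.Move)) : Prop :=
  S.Nonempty ∧ ∀ s ∈ S, ∀ a : G.Move, G.plays (s ++ [a]) → ∃ b, s ++ [a, b] ∈ S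

/-- A strategy is winning if it is total and every infinite play all of whose
P-ending prefixes lie in it is P-winning. -/
def IsWinning (G : Game) (S : Set (List G.Move)) : Prop :=
  IsTotal G S ∧
  ∀ f : ℕ → G.Move, G.InfPlay f →
    (∀ n, G.lab (f n) = true → pref f (n + 1) ∈ S) → G.win f

section Compose

variable (A B C : Game)

/-- Restrict an interaction move to the component `A ⊸ B`. -/
def toAB : A.Move ⊕ B.Move ⊕ C.Move → Option (B.Move ⊕ A.Move)
  | Sum.inl a => some (Sum.inr a)
  | Sum.inr (Sum.inl b) => some (Sum.inl b)
  | Sum.inr (Sum.inr _) => none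

/-- Restrict an interaction move to the component `B ⊸ C`. -/
def toBC : A.Move ⊕ B.Move ⊕ C.Move → Option (C.Move ⊕ B.Move)
  | Sum.inl _ => none
  | Sum.inr (Sum.inl b) => some (Sum.inr b)
  | Sum.inr (Sum.inr c) => some (Sum.inl c)

/-- Restrict an interaction move to the component `A ⊸ C`. -/
def toAC : A.Move ⊕ B.Move ⊕ C.Move → Option (C.Move ⊕ A.Move)
  | Sum.inl a => some (Sum.inr a)
  | Sum.inr (Sum.inl _) => none
  | Sum.inr (Sum.inr c) => some (Sum.inl c)

/-- Composition of strategies by parallel composition plus hiding. -/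
def composeSet (S : Set (List (linHom A B).Move)) (T : Set (List (linHom B C).Move)) :
    Set (List (linHom A C).Move) :=
  { t | ∃ u : List (A.Move ⊕ B.Move ⊕ C.Move),
      u.filterMap (toAB A B C) ∈ S ∧ u.filterMap (toBC A B C) ∈ T ∧
      t = u.filterMap (toAC A B C) }

end Compose

/-- The copycat strategy on `A ⊸ A`. -/
def copycatSet (A : Game) : Set (List (linHom A A).Move) :=
  { s | (linHom A A).plays s ∧
      ∀ t : List (linHom A A).Move, t <+: s → t.length % 2 = 0 → projL t = projR t }

/-- A forest isomorphism between games: a prefix-monotone bijection between the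
sets of plays (with prefix-monotone inverse) which respects the P-winning
infinite plays. -/
structure ForestIso (A B : Game) where
  startEq : A.start = B.start
  toFun : {s : List A.Move // A.plays s} → {t : List B.Move // B.plays t}
  invFun : {t : List B.Move // B.plays t} → {s : List A.Move // A.plays s}
  left_inv : Function.LeftInverse invFun toFun
  right_inv : Function.RightInverse invFun toFun
  mono : ∀ s t, s.1 <+: t.1 → (toFun s).1 <+: (toFun t).1
  mono_inv : ∀ s t, s.1 <+: t.1 → (invFun s).1 <+: (invFun t).1
  win_iff : ∀ (f : ℕ → A.Move) (g : ℕ → B.Move),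
    A.InfPlay f → B.InfPlay g →
    (∀ (n : ℕ) (h : A.plays (pref f n)),
        ∀ (i : ℕ) (hi : i < (toFun ⟨pref f n, h⟩).1.length),
          (toFun ⟨pref f n, h⟩).1.get ⟨i, hi⟩ = g i) →
    (A.win f ↔ B.win g)

/-!
A position of the interaction `σ ∥ τ` is governed by the parities of its `A ⊸ B` and `B ⊸ C`
parts. By the switching condition for `⊸` they are never both odd, so exactly one of the
external Opponent, `σ` and `τ` is to move. Hence the visible part alternates and is a play of
`A ⊸ C`; even visible prefixes come from positions where both strategies have just moved; and
determinism of `σ` and `τ` fixes the hidden interaction, hence the next visible move. For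
totality, after an Opponent move `σ` and `τ` answer each other in `B` until one of them moves
visibly: each exchange lengthens the play of `B`, so boundedness of `B` ends the exchange.
-/

theorem _root_.List.prefix_or_prefix_or_diverge {α : Type*} : ∀ l₁ l₂ : List α,
    l₁ <+: l₂ ∨ l₂ <+: l₁ ∨ ∃ w x y r₁ r₂, x ≠ y ∧ l₁ = w ++ x :: r₁ ∧ l₂ = w ++ y :: r₂
  | [], _ => .inl List.nil_prefix
  | _ :: _, [] => .inr (.inl List.nil_prefix)
  | a :: l₁, b :: l₂ => by
    obtain rfl | hab := eq_or_ne a b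
    · rcases List.prefix_or_prefix_or_diverge l₁ l₂ with h | h | ⟨w, x, y, r₁, r₂, hxy, rfl, rfl⟩
      · exact .inl ((List.prefix_cons_inj a).mpr h)
      · exact .inr (.inl ((List.prefix_cons_inj a).mpr h))
      · exact .inr (.inr ⟨a :: w, x, y, r₁, r₂, hxy, rfl, rfl⟩)
    · exact .inr (.inr ⟨[], a, b, l₁, l₂, hab, rfl, rfl⟩)

section Sum

variable {α β : Type}

@[simp] theorem projL_nil : projL ([] : List (α ⊕ β)) = [] := rfl
@[simp] theorem projR_nil : projR ([] : List (α ⊕ β)) = [] := rfl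
@[simp] theorem projL_cons_inl (a : α) (s : List (α ⊕ β)) :
    projL (.inl a :: s) = a :: projL s := rfl
@[simp] theorem projL_cons_inr (b : β) (s : List (α ⊕ β)) : projL (.inr b :: s) = projL s := rfl
@[simp] theorem projR_cons_inl (a : α) (s : List (α ⊕ β)) : projR (.inl a :: s) = projR s := rfl
@[simp] theorem projR_cons_inr (b : β) (s : List (α ⊕ β)) :
    projR (.inr b :: s) = b :: projR s := rfl
@[simp] theorem projL_append (s t : List (α ⊕ β)) : projL (s ++ t) = projL s ++ projL t :=
  List.filterMap_append
@[simp] theorem projR_append (s t : List (α ⊕ β)) : projR (s ++ t) = projR s ++ projR t :=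
  List.filterMap_append

theorem length_projL_add_length_projR (s : List (α ⊕ β)) :
    (projL s).length + (projR s).length = s.length := by
  induction s with
  | nil => rfl
  | cons x s ih => cases x <;> simp <;> omega

end Sum

section Alternation

variable {M : Type} {lab : M → Bool} {b : Bool}

theorem altWith.of_prefix {s t : List M} (h : altWith lab b t) (hst : s <+: t) :
    altWith lab b s := by
  obtain ⟨r, rfl⟩ := hst
  intro i hi
  simpa [List.getElem_append_left hi] using h i (by simp; omega)

theorem altWith_append_singleton {s : List M} {m : M} :
    altWith lab b (s ++ [m]) ↔ altWith lab b s ∧ lab m = (b != decide (s.length % 2 = 1)) := by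
  refine ⟨fun h => ⟨h.of_prefix (List.prefix_append _ _), by simpa using h s.length (by simp)⟩,
    fun ⟨hs, hm⟩ i hi => ?_⟩
  rcases Nat.lt_or_eq_of_le (Nat.lt_succ_iff.mp (by simpa using hi)) with hi' | rfl
  · simpa [List.getElem_append_left hi'] using hs i hi'
  · simpa using hm

end Alternation

structure Game.WellformedNegative (G : Game) : Prop where
  toWellformed : G.Wellformed
  negative : G.Negative

theorem Game.WellformedNegative.lab_eq {G : Game} (hG : G.WellformedNegative)
    {s : List G.Move} {m : G.Move} (h : G.plays (s ++ [m])) :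
    G.lab m = decide (s.length % 2 = 1) := by
  have halt := hG.toWellformed.alternating _ h
  rw [Game.alt, show G.start = false from hG.negative] at halt
  simpa using (altWith_append_singleton.mp halt).2

section LinHom

variable {X Y : Game} {s t : List (Y.Move ⊕ X.Move)}

@[simp] theorem linHom_lab_inl (y : Y.Move) : (linHom X Y).lab (.inl y) = Y.lab y := rfl
@[simp] theorem linHom_lab_inr (x : X.Move) : (linHom X Y).lab (.inr x) = !X.lab x := rfl

theorem linHom_plays_altWith (s : List (linHom X Y).Move) (h : (linHom X Y).plays s) :
    altWith (linHom X Y).lab false s :=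
  h.2.2.1

theorem linHom_lab_eq {m : Y.Move ⊕ X.Move}
    (h : (linHom X Y).plays (s ++ [m] : List (Y.Move ⊕ X.Move))) :
    (linHom X Y).lab m = decide (s.length % 2 = 1) :=
  (altWith_append_singleton.mp h.2.2.1).2.trans (Bool.false_bne _)

theorem linHom_plays_of_prefix (hX : X.WellformedNegative) (hY : Y.Wellformed)
    (ht : (linHom X Y).plays t) (hst : s <+: t) : (linHom X Y).plays s := by
  obtain ⟨hYt, hXt, halt, -⟩ := ht
  obtain ⟨r, rfl⟩ := hst
  refine ⟨hY.prefix_closed _ (projL r) (by simpa using hYt),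
    hX.toWellformed.prefix_closed _ (projR r) (by simpa using hXt), halt.of_prefix ⟨r, rfl⟩,
    fun hL => ?_⟩
  rcases s with _ | ⟨y | x, s⟩
  · rfl
  · simp at hL
  · -- an `X`-move cannot open the play: it is an Opponent move of `X`, a Player move of `X ⊸ Y`
    have hx : X.plays ([] ++ [x]) :=
      hX.toWellformed.prefix_closed _ (projR s ++ projR r) (by simpa using hXt)
    have h0 := halt 0 (by simp)
    simp [hX.lab_eq hx] at h0

theorem linHom_plays_append_inl (hs : (linHom X Y).plays s) {y : Y.Move}
    (hy : Y.plays (projL s ++ [y])) (hlab : Y.lab y = decide (s.length % 2 = 1)) :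
    (linHom X Y).plays (s ++ [.inl y] : List (Y.Move ⊕ X.Move)) :=
  ⟨by simpa using hy, by simpa using hs.2.1,
    altWith_append_singleton.mpr ⟨hs.2.2.1, by simpa using hlab⟩, by simp⟩

theorem linHom_plays_append_inr (hs : (linHom X Y).plays s) {x : X.Move}
    (hx : X.plays (projR s ++ [x])) (hlab : (!X.lab x) = decide (s.length % 2 = 1))
    (hne : projL s ≠ []) : (linHom X Y).plays (s ++ [.inr x] : List (Y.Move ⊕ X.Move)) :=
  ⟨by simpa using hs.1, by simpa using hx,
    altWith_append_singleton.mpr ⟨hs.2.2.1, by simpa using hlab⟩,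
    fun h => absurd (by simpa using h) hne⟩

theorem even_length_projR_of_linHom_plays_append_inl (hY : Y.WellformedNegative) {y : Y.Move}
    (h : (linHom X Y).plays (s ++ [.inl y] : List (Y.Move ⊕ X.Move))) : Even (projR s).length := by
  have h1 : Y.lab y = _ := linHom_lab_eq h
  have h2 := hY.lab_eq (s := projL s) (by simpa using h.1)
  have := length_projL_add_length_projR s
  rw [h1, decide_eq_decide] at h2
  rw [Nat.even_iff]
  omega

theorem odd_length_projL_of_linHom_plays_append_inr (hX : X.WellformedNegative) {x : X.Move}
    (h : (linHom X Y).plays (s ++ [.inr x] : List (Y.Move ⊕ X.Move))) : Odd (projL s).length := by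
  have h1 : (!X.lab x) = _ := linHom_lab_eq h
  have h2 := hX.lab_eq (s := projR s) (by simpa using h.2.1)
  have := length_projL_add_length_projR s
  rw [h2, ← decide_not, decide_eq_decide] at h1
  rw [Nat.odd_iff]
  omega

theorem odd_length_projL_of_linHom_plays (hX : X.WellformedNegative) (hY : Y.WellformedNegative)
    (h : (linHom X Y).plays s) (hR : Odd (projR s).length) : Odd (projL s).length := by
  rcases s.eq_nil_or_concat' with rfl | ⟨s, y | x, rfl⟩
  · simp at hR
  · exact absurd (by simpa using hR)
      (Nat.not_odd_iff_even.mpr (even_length_projR_of_linHom_plays_append_inl hY h))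
  · simpa using odd_length_projL_of_linHom_plays_append_inr hX h

end LinHom

section Strategy

variable {G : Game} {S : Set (List G.Move)}

theorem IsStrategy.even_length (hS : IsStrategy G S)
    (hG : ∀ s, G.plays s → altWith G.lab false s) {s : List G.Move} (hs : s ∈ S) :
    Even s.length := by
  rcases s.eq_nil_or_concat' with rfl | ⟨s, m, rfl⟩
  · simp
  · have h := (altWith_append_singleton.mp (hG _ (hS.1 _ hs))).2
    rw [hS.2.1 s m hs, Bool.false_bne, eq_comm, decide_eq_true_eq] at h
    simp [Nat.even_add_one, Nat.even_iff, h]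

theorem IsStrategy.mem_of_append_of_length_eq (hS : IsStrategy G S) {t : List G.Move} :
    ∀ (n : ℕ) (r : List G.Move), r.length = 2 * n → t ++ r ∈ S → t ∈ S
  | 0, r, hr, h => by simpa [List.length_eq_zero_iff.mp hr] using h
  | n + 1, r, hr, h => by
    obtain ⟨a, b, hab⟩ := List.length_eq_two.mp (show (r.drop (2 * n)).length = 2 by simp; omega)
    refine hS.mem_of_append_of_length_eq n (r.take (2 * n)) (by simp; omega) (hS.2.2.1 _ a b ?_)
    rwa [List.append_assoc, ← hab, List.take_append_drop]

theorem IsStrategy.mem_of_prefix (hS : IsStrategy G S)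
    (hG : ∀ s, G.plays s → altWith G.lab false s) {s t : List G.Move} (hs : s ∈ S)
    (hts : t <+: s) (ht : Even t.length) : t ∈ S := by
  obtain ⟨r, rfl⟩ := hts
  obtain ⟨n, hn⟩ : Even r.length := by
    simpa [Nat.even_add, ht] using hS.even_length hG hs
  exact hS.mem_of_append_of_length_eq n r (by omega) hs

theorem IsStrategy.nil_mem (hS : IsStrategy G S) (hG : ∀ s, G.plays s → altWith G.lab false s)
    (hne : S.Nonempty) : [] ∈ S :=
  hS.mem_of_prefix hG hne.some_mem List.nil_prefix (by simp)

theorem IsStrategy.eq_of_odd_of_prefix (hS : IsStrategy G S)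
    (hG : ∀ s, G.plays s → altWith G.lab false s) {p : List G.Move} {a b : G.Move}
    (hp : Odd p.length) (ha : ∃ s ∈ S, p ++ [a] <+: s) (hb : ∃ s ∈ S, p ++ [b] <+: s) :
    a = b := by
  have heven : Even (p.length + 1) := by simpa [Nat.even_add_one] using hp
  obtain ⟨s, hs, hps⟩ := ha
  obtain ⟨t, ht, hpt⟩ := hb
  exact hS.2.2.2.1 p a b (hS.mem_of_prefix hG hs hps (by simpa using heven))
    (hS.mem_of_prefix hG ht hpt (by simpa using heven))

def AwaitsResponse (G : Game) (S : Set (List G.Move)) (s : List G.Move) : Prop :=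
  G.plays s ∧ ∃ t ∈ S, ∃ a, s = t ++ [a]

theorem AwaitsResponse.odd_length (hS : IsStrategy G S)
    (hG : ∀ s, G.plays s → altWith G.lab false s) {s : List G.Move}
    (hs : AwaitsResponse G S s) : Odd s.length := by
  obtain ⟨-, t, ht, a, rfl⟩ := hs
  simpa [Nat.odd_add_one] using hS.even_length hG ht

theorem IsTotal.exists_append_mem (hSt : IsTotal G S) {s : List G.Move}
    (hs : AwaitsResponse G S s) : ∃ b, s ++ [b] ∈ S := by
  obtain ⟨hplay, t, ht, a, rfl⟩ := hs
  simpa using hSt.2 t ht a hplay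

end Strategy

section Projections

variable {A B C : Game}

def projAB (u : List (A.Move ⊕ B.Move ⊕ C.Move)) : List (B.Move ⊕ A.Move) :=
  u.filterMap (toAB A B C)

def projBC (u : List (A.Move ⊕ B.Move ⊕ C.Move)) : List (C.Move ⊕ B.Move) :=
  u.filterMap (toBC A B C)

def projAC (u : List (A.Move ⊕ B.Move ⊕ C.Move)) : List (C.Move ⊕ A.Move) :=
  u.filterMap (toAC A B C)

variable (u v : List (A.Move ⊕ B.Move ⊕ C.Move)) (a : A.Move) (b : B.Move) (c : C.Move)

@[simp] theorem projAB_nil : projAB ([] : List (A.Move ⊕ B.Move ⊕ C.Move)) = [] := rfl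
@[simp] theorem projBC_nil : projBC ([] : List (A.Move ⊕ B.Move ⊕ C.Move)) = [] := rfl
@[simp] theorem projAC_nil : projAC ([] : List (A.Move ⊕ B.Move ⊕ C.Move)) = [] := rfl
@[simp] theorem projAB_cons_A : projAB (.inl a :: u) = .inr a :: projAB u := rfl
@[simp] theorem projAB_cons_B : projAB (.inr (.inl b) :: u) = .inl b :: projAB u := rfl
@[simp] theorem projAB_cons_C : projAB (.inr (.inr c) :: u) = projAB u := rfl
@[simp] theorem projBC_cons_A : projBC (.inl a :: u) = projBC u := rfl
@[simp] theorem projBC_cons_B : projBC (.inr (.inl b) :: u) = .inr b :: projBC u := rfl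
@[simp] theorem projBC_cons_C : projBC (.inr (.inr c) :: u) = .inl c :: projBC u := rfl
@[simp] theorem projAC_cons_A : projAC (.inl a :: u) = .inr a :: projAC u := rfl
@[simp] theorem projAC_cons_B : projAC (.inr (.inl b) :: u) = projAC u := rfl
@[simp] theorem projAC_cons_C : projAC (.inr (.inr c) :: u) = .inl c :: projAC u := rfl
@[simp] theorem projAB_append : projAB (u ++ v) = projAB u ++ projAB v := List.filterMap_append
@[simp] theorem projBC_append : projBC (u ++ v) = projBC u ++ projBC v := List.filterMap_append
@[simp] theorem projAC_append : projAC (u ++ v) = projAC u ++ projAC v := List.filterMap_append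

theorem projR_projBC : projR (projBC u) = projL (projAB u) := by
  induction u with
  | nil => rfl
  | cons x u ih => rcases x with a | b | c <;> simp [ih]

theorem projL_projAC : projL (projAC u) = projL (projBC u) := by
  induction u with
  | nil => rfl
  | cons x u ih => rcases x with a | b | c <;> simp [ih]

theorem projR_projAC : projR (projAC u) = projR (projAB u) := by
  induction u with
  | nil => rfl
  | cons x u ih => rcases x with a | b | c <;> simp [ih]

theorem length_projAB_add_length_projBC :
    (projAB u).length + (projBC u).length = (projAC u).length + 2 * (projL (projAB u)).length := by
  induction u with
  | nil => rfl
  | cons x u ih => rcases x with a | b | c <;> simp <;> omega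

variable {u v}

theorem projAB_prefix (h : u <+: v) : projAB u <+: projAB v := h.filterMap _
theorem projBC_prefix (h : u <+: v) : projBC u <+: projBC v := h.filterMap _
theorem projAC_prefix (h : u <+: v) : projAC u <+: projAC v := h.filterMap _

variable {x y : A.Move ⊕ B.Move ⊕ C.Move}

theorem projAB_append_of_toAB_eq_some {m : B.Move ⊕ A.Move} (h : toAB A B C x = some m) :
    projAB (u ++ [x]) = projAB u ++ [m] := by
  simp [projAB, List.filterMap_append, h]

theorem projBC_append_of_toBC_eq_some {m : C.Move ⊕ B.Move} (h : toBC A B C x = some m) :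
    projBC (u ++ [x]) = projBC u ++ [m] := by
  simp [projBC, List.filterMap_append, h]

theorem projAC_append_of_toAC_eq_some {m : C.Move ⊕ A.Move} (h : toAC A B C x = some m) :
    projAC (u ++ [x]) = projAC u ++ [m] := by
  simp [projAC, List.filterMap_append, h]

theorem toAB_inj {m : B.Move ⊕ A.Move} (hx : toAB A B C x = some m)
    (hy : toAB A B C y = some m) : x = y := by
  rcases x with _ | _ | _ <;> rcases y with _ | _ | _ <;> simp [toAB] at hx hy <;>
    (subst hx; simp_all)

theorem toBC_inj {m : C.Move ⊕ B.Move} (hx : toBC A B C x = some m)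
    (hy : toBC A B C y = some m) : x = y := by
  rcases x with _ | _ | _ <;> rcases y with _ | _ | _ <;> simp [toBC] at hx hy <;>
    (subst hx; simp_all)

theorem toAC_inj {m : C.Move ⊕ A.Move} (hx : toAC A B C x = some m)
    (hy : toAC A B C y = some m) : x = y := by
  rcases x with _ | _ | _ <;> rcases y with _ | _ | _ <;> simp [toAC] at hx hy <;>
    (subst hx; simp_all)

end Projections

section Interaction

variable {A B C : Game} {u v : List (A.Move ⊕ B.Move ⊕ C.Move)}

structure IsInteraction (u : List (A.Move ⊕ B.Move ⊕ C.Move)) : Prop where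
  playsAB : (linHom A B).plays (projAB u)
  playsBC : (linHom B C).plays (projBC u)

theorem IsInteraction.of_prefix (hA : A.WellformedNegative) (hB : B.WellformedNegative)
    (hC : C.Wellformed) (hv : IsInteraction v) (huv : u <+: v) : IsInteraction u :=
  ⟨linHom_plays_of_prefix hA hB.toWellformed hv.playsAB (projAB_prefix huv),
    linHom_plays_of_prefix hB hC hv.playsBC (projBC_prefix huv)⟩

/-- The switching condition: `σ` and `τ` are never both to move. -/
theorem IsInteraction.even_or_even (hA : A.WellformedNegative) (hB : B.WellformedNegative)
    (hC : C.WellformedNegative) (hu : IsInteraction u) :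
    Even (projAB u).length ∨ Even (projBC u).length := by
  have hAB := odd_length_projL_of_linHom_plays hA hB hu.playsAB
  have hBC := odd_length_projL_of_linHom_plays hB hC hu.playsBC
  have hlAB := length_projL_add_length_projR (projAB u)
  have hlBC := length_projL_add_length_projR (projBC u)
  rw [projR_projBC] at hBC hlBC
  simp only [← Nat.not_odd_iff_even, Nat.odd_iff] at *
  omega

theorem IsInteraction.toAB_ne_none (hA : A.WellformedNegative) (hB : B.WellformedNegative)
    (hC : C.WellformedNegative) {x : A.Move ⊕ B.Move ⊕ C.Move} (hux : IsInteraction (u ++ [x]))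
    (hodd : Odd (projAB u).length) : toAB A B C x ≠ none := by
  rcases x with a | b | c
  · simp [toAB]
  · simp [toAB]
  · have h₁ := (hux.of_prefix hA hB hC.toWellformed (List.prefix_append _ _)).even_or_even hA hB hC
    have h₂ := hux.even_or_even hA hB hC
    simp only [projAB_append, projBC_append, projAB_cons_C, projBC_cons_C, projAB_nil,
      projBC_nil, List.append_nil, List.length_append, List.length_singleton] at h₂
    simp only [← Nat.not_odd_iff_even, Nat.odd_iff] at *
    omega

theorem IsInteraction.toBC_ne_none (hA : A.WellformedNegative) (hB : B.WellformedNegative)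
    (hC : C.WellformedNegative) {x : A.Move ⊕ B.Move ⊕ C.Move} (hux : IsInteraction (u ++ [x]))
    (hodd : Odd (projBC u).length) : toBC A B C x ≠ none := by
  rcases x with a | b | c
  · have h₁ := (hux.of_prefix hA hB hC.toWellformed (List.prefix_append _ _)).even_or_even hA hB hC
    have h₂ := hux.even_or_even hA hB hC
    simp only [projAB_append, projBC_append, projAB_cons_A, projBC_cons_A, projAB_nil,
      projBC_nil, List.append_nil, List.length_append, List.length_singleton] at h₂
    simp only [← Nat.not_odd_iff_even, Nat.odd_iff] at *
    omega
  · simp [toBC]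
  · simp [toBC]

theorem IsInteraction.toAC_ne_none (hA : A.WellformedNegative) (hB : B.WellformedNegative)
    (hC : C.WellformedNegative) {x : A.Move ⊕ B.Move ⊕ C.Move} (hux : IsInteraction (u ++ [x]))
    (hAB : Even (projAB u).length) (hBC : Even (projBC u).length) : toAC A B C x ≠ none := by
  rcases x with a | b | c
  · simp [toAC]
  · have h := hux.even_or_even hA hB hC
    simp only [projAB_append, projBC_append, projAB_cons_B, projBC_cons_B, projAB_nil,
      projBC_nil, List.length_append, List.length_singleton] at h
    simp only [Nat.even_add_one] at h
    tauto
  · simp [toAC]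

theorem IsInteraction.altWith_projAC (hA : A.WellformedNegative) (hB : B.WellformedNegative)
    (hC : C.WellformedNegative) (hu : IsInteraction u) :
    altWith (Sum.elim C.lab fun a => !A.lab a) false (projAC u) := by
  induction u using List.reverseRecOn with
  | nil => exact fun i hi => absurd hi (by simp)
  | append_singleton u x ih =>
    have hu' := hu.of_prefix hA hB hC.toWellformed (List.prefix_append _ _)
    have hcount := length_projAB_add_length_projBC u
    rcases x with a | b | c
    · have hBC : ¬ Odd (projBC u).length := fun h => hu.toBC_ne_none hA hB hC h rfl
      have hplay := hu.playsAB
      simp only [projAB_append, projAB_cons_A, projAB_nil] at hplay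
      have hlab : (!A.lab a) = _ := linHom_lab_eq hplay
      simp only [projAC_append, projAC_cons_A, projAC_nil]
      refine altWith_append_singleton.mpr ⟨ih hu', ?_⟩
      rw [Sum.elim_inr, hlab, Bool.false_bne, decide_eq_decide]
      simp only [Nat.odd_iff] at hBC
      omega
    · simpa using ih hu'
    · have hAB : ¬ Odd (projAB u).length := fun h => hu.toAB_ne_none hA hB hC h rfl
      have hplay := hu.playsBC
      simp only [projBC_append, projBC_cons_C, projBC_nil] at hplay
      have hlab : C.lab c = _ := linHom_lab_eq hplay
      simp only [projAC_append, projAC_cons_C, projAC_nil]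
      refine altWith_append_singleton.mpr ⟨ih hu', ?_⟩
      rw [Sum.elim_inl, hlab, Bool.false_bne, decide_eq_decide]
      simp only [Nat.odd_iff] at hAB
      omega

theorem IsInteraction.plays_projAC (hA : A.WellformedNegative) (hB : B.WellformedNegative)
    (hC : C.WellformedNegative) (hu : IsInteraction u) : (linHom A C).plays (projAC u) := by
  refine ⟨?_, ?_, hu.altWith_projAC hA hB hC, fun hnil => ?_⟩
  · rw [projL_projAC]
    exact hu.playsBC.1
  · rw [projR_projAC]
    exact hu.playsAB.2.1
  · rw [projL_projAC] at hnil
    rw [projR_projAC]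
    exact hu.playsAB.2.2.2 (projR_projBC u ▸ hu.playsBC.2.2.2 hnil)

end Interaction

section Composition

variable {A B C : Game} {S : Set (List (linHom A B).Move)} {T : Set (List (linHom B C).Move)}
  {u : List (A.Move ⊕ B.Move ⊕ C.Move)}

theorem mem_composeSet {t : List (C.Move ⊕ A.Move)} :
    t ∈ composeSet A B C S T ↔ ∃ u, projAB u ∈ S ∧ projBC u ∈ T ∧ t = projAC u :=
  Iff.rfl

theorem IsInteraction.of_mem (hS : IsStrategy (linHom A B) S) (hT : IsStrategy (linHom B C) T)
    (hAB : projAB u ∈ S) (hBC : projBC u ∈ T) : IsInteraction u :=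
  ⟨hS.1 _ hAB, hT.1 _ hBC⟩

theorem even_length_projAC (hS : IsStrategy (linHom A B) S) (hT : IsStrategy (linHom B C) T)
    (hAB : projAB u ∈ S) (hBC : projBC u ∈ T) : Even (projAC u).length := by
  have h₁ : Even (projAB u).length := hS.even_length linHom_plays_altWith hAB
  have h₂ : Even (projBC u).length := hT.even_length linHom_plays_altWith hBC
  have := length_projAB_add_length_projBC u
  simp only [Nat.even_iff] at *
  omega

theorem even_length_of_mem_composeSet (hS : IsStrategy (linHom A B) S)
    (hT : IsStrategy (linHom B C) T) {t : List (C.Move ⊕ A.Move)}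
    (ht : t ∈ composeSet A B C S T) : Even t.length := by
  obtain ⟨u, hAB, hBC, rfl⟩ := mem_composeSet.mp ht
  exact even_length_projAC hS hT hAB hBC

theorem lab_eq_true_of_mem_composeSet (hA : A.WellformedNegative) (hB : B.WellformedNegative)
    (hC : C.WellformedNegative) (hS : IsStrategy (linHom A B) S)
    (hT : IsStrategy (linHom B C) T) {s : List (C.Move ⊕ A.Move)} {m : C.Move ⊕ A.Move}
    (h : s ++ [m] ∈ composeSet A B C S T) : (linHom A C).lab m = true := by
  have heven := even_length_of_mem_composeSet hS hT h
  obtain ⟨u, hAB, hBC, hu⟩ := mem_composeSet.mp h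
  have hplay := (IsInteraction.of_mem hS hT hAB hBC).plays_projAC hA hB hC
  rw [← hu] at hplay
  rw [linHom_lab_eq hplay]
  simpa [Nat.even_add_one, Nat.odd_iff] using heven

theorem exists_prefix_length_projAC_eq (u : List (A.Move ⊕ B.Move ⊕ C.Move)) {k : ℕ}
    (hk : k ≤ (projAC u).length) : ∃ v, v <+: u ∧ (projAC v).length = k := by
  induction u using List.reverseRecOn with
  | nil => exact ⟨[], List.prefix_rfl, by simp_all⟩
  | append_singleton u x ih =>
    by_cases h : k ≤ (projAC u).length
    · obtain ⟨v, hv, hl⟩ := ih h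
      exact ⟨v, hv.trans (List.prefix_append _ _), hl⟩
    · refine ⟨u ++ [x], List.prefix_rfl, ?_⟩
      have : (projAC (u ++ [x])).length ≤ (projAC u).length + 1 := by
        rcases x with a | b | c <;> simp
      omega

/-- Cut the interaction where its visible part is `s`: there the two hidden parts have even total
length and are not both odd, so both strategies have just moved. -/
theorem composeSet_mem_of_prefix (hA : A.WellformedNegative) (hB : B.WellformedNegative)
    (hC : C.WellformedNegative) (hS : IsStrategy (linHom A B) S)
    (hT : IsStrategy (linHom B C) T) {s t : List (C.Move ⊕ A.Move)}
    (ht : t ∈ composeSet A B C S T) (hst : s <+: t) (hs : Even s.length) :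
    s ∈ composeSet A B C S T := by
  obtain ⟨u, hAB, hBC, rfl⟩ := mem_composeSet.mp ht
  obtain ⟨v, hvu, hv⟩ := exists_prefix_length_projAC_eq u hst.length_le
  have hvs : projAC v = s :=
    (List.prefix_of_prefix_length_le (projAC_prefix hvu) hst hv.le).eq_of_length hv
  have hpar := ((IsInteraction.of_mem hS hT hAB hBC).of_prefix hA hB hC.toWellformed
    hvu).even_or_even hA hB hC
  have hcount := length_projAB_add_length_projBC v
  rw [hvs] at hcount
  have hABv : Even (projAB v).length := by
    simp only [Nat.even_iff] at *
    omega
  have hBCv : Even (projBC v).length := by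
    simp only [Nat.even_iff] at *
    omega
  exact ⟨v, hS.mem_of_prefix linHom_plays_altWith hAB (projAB_prefix hvu) hABv,
    hT.mem_of_prefix linHom_plays_altWith hBC (projBC_prefix hvu) hBCv, hvs.symm⟩

theorem composeSet_mem_of_append_pair (hA : A.WellformedNegative) (hB : B.WellformedNegative)
    (hC : C.WellformedNegative) (hS : IsStrategy (linHom A B) S)
    (hT : IsStrategy (linHom B C) T) {s : List (C.Move ⊕ A.Move)} {a b : C.Move ⊕ A.Move}
    (h : s ++ [a, b] ∈ composeSet A B C S T) : s ∈ composeSet A B C S T :=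
  composeSet_mem_of_prefix hA hB hC hS hT h (List.prefix_append _ _)
    (by simpa [Nat.even_add] using even_length_of_mem_composeSet hS hT h)

end Composition

section Determinism

variable {A B C : Game} {S : Set (List (linHom A B).Move)} {T : Set (List (linHom B C).Move)}
  {u₁ u₂ w : List (A.Move ⊕ B.Move ⊕ C.Move)} {x y : A.Move ⊕ B.Move ⊕ C.Move}

/-- An odd `A ⊸ B` (resp. `B ⊸ C`) part means that `σ` (resp. `τ`) is to move, and its answer
is determined. -/
theorem eq_of_prefix_of_odd (hA : A.WellformedNegative) (hB : B.WellformedNegative)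
    (hC : C.WellformedNegative) (hS : IsStrategy (linHom A B) S)
    (hT : IsStrategy (linHom B C) T) (hAB₁ : projAB u₁ ∈ S) (hBC₁ : projBC u₁ ∈ T)
    (hAB₂ : projAB u₂ ∈ S) (hBC₂ : projBC u₂ ∈ T) (hx : w ++ [x] <+: u₁) (hy : w ++ [y] <+: u₂)
    (hodd : Odd (projAB w).length ∨ Odd (projBC w).length) : x = y := by
  have hix := (IsInteraction.of_mem hS hT hAB₁ hBC₁).of_prefix hA hB hC.toWellformed hx
  have hiy := (IsInteraction.of_mem hS hT hAB₂ hBC₂).of_prefix hA hB hC.toWellformed hy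
  rcases hodd with hodd | hodd
  · obtain ⟨mx, hmx⟩ := Option.ne_none_iff_exists'.mp (hix.toAB_ne_none hA hB hC hodd)
    obtain ⟨my, hmy⟩ := Option.ne_none_iff_exists'.mp (hiy.toAB_ne_none hA hB hC hodd)
    have hpx := projAB_prefix hx
    have hpy := projAB_prefix hy
    rw [projAB_append_of_toAB_eq_some hmx] at hpx
    rw [projAB_append_of_toAB_eq_some hmy] at hpy
    obtain rfl : mx = my :=
      hS.eq_of_odd_of_prefix linHom_plays_altWith hodd ⟨_, hAB₁, hpx⟩ ⟨_, hAB₂, hpy⟩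
    exact toAB_inj hmx hmy
  · obtain ⟨mx, hmx⟩ := Option.ne_none_iff_exists'.mp (hix.toBC_ne_none hA hB hC hodd)
    obtain ⟨my, hmy⟩ := Option.ne_none_iff_exists'.mp (hiy.toBC_ne_none hA hB hC hodd)
    have hpx := projBC_prefix hx
    have hpy := projBC_prefix hy
    rw [projBC_append_of_toBC_eq_some hmx] at hpx
    rw [projBC_append_of_toBC_eq_some hmy] at hpy
    obtain rfl : mx = my :=
      hT.eq_of_odd_of_prefix linHom_plays_altWith hodd ⟨_, hBC₁, hpx⟩ ⟨_, hBC₂, hpy⟩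
    exact toBC_inj hmx hmy

/-- With the external Opponent to move, the next move is visible and lies strictly inside the
common part `s` of the two visible plays. -/
theorem eq_of_prefix_of_even (hA : A.WellformedNegative) (hB : B.WellformedNegative)
    (hC : C.WellformedNegative) (hS : IsStrategy (linHom A B) S)
    (hT : IsStrategy (linHom B C) T) (hAB₁ : projAB u₁ ∈ S) (hBC₁ : projBC u₁ ∈ T)
    (hAB₂ : projAB u₂ ∈ S) (hBC₂ : projBC u₂ ∈ T) {s : List (C.Move ⊕ A.Move)}
    {m₁ m₂ : C.Move ⊕ A.Move} (hs : Odd s.length) (e₁ : projAC u₁ = s ++ [m₁])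
    (e₂ : projAC u₂ = s ++ [m₂]) (hx : w ++ [x] <+: u₁) (hy : w ++ [y] <+: u₂)
    (hAB : Even (projAB w).length) (hBC : Even (projBC w).length) : x = y := by
  have hix := (IsInteraction.of_mem hS hT hAB₁ hBC₁).of_prefix hA hB hC.toWellformed hx
  have hiy := (IsInteraction.of_mem hS hT hAB₂ hBC₂).of_prefix hA hB hC.toWellformed hy
  obtain ⟨mx, hmx⟩ := Option.ne_none_iff_exists'.mp (hix.toAC_ne_none hA hB hC hAB hBC)
  obtain ⟨my, hmy⟩ := Option.ne_none_iff_exists'.mp (hiy.toAC_ne_none hA hB hC hAB hBC)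
  have hpx := projAC_prefix hx
  have hpy := projAC_prefix hy
  rw [projAC_append_of_toAC_eq_some hmx, e₁] at hpx
  rw [projAC_append_of_toAC_eq_some hmy, e₂] at hpy
  have hcount := length_projAB_add_length_projBC w
  have hlen := hpx.length_le
  simp only [List.length_append, List.length_singleton] at hlen
  have hw : (projAC w).length + 1 ≤ s.length := by
    simp only [Nat.even_iff, Nat.odd_iff] at hAB hBC hs
    omega
  have hpx' := List.prefix_of_prefix_length_le hpx (List.prefix_append s [m₁]) (by simpa using hw)
  have hpy' := List.prefix_of_prefix_length_le hpy (List.prefix_append s [m₂]) (by simpa using hw)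
  obtain rfl : mx = my := by simpa using List.prefix_of_prefix_length_le hpx' hpy' (by simp)
  exact toAC_inj hmx hmy

theorem composeSet_deterministic (hA : A.WellformedNegative) (hB : B.WellformedNegative)
    (hC : C.WellformedNegative) (hS : IsStrategy (linHom A B) S)
    (hT : IsStrategy (linHom B C) T) {s : List (C.Move ⊕ A.Move)} {m₁ m₂ : C.Move ⊕ A.Move}
    (h₁ : s ++ [m₁] ∈ composeSet A B C S T) (h₂ : s ++ [m₂] ∈ composeSet A B C S T) :
    m₁ = m₂ := by
  have hs : Odd s.length := by
    simpa [Nat.even_add_one] using even_length_of_mem_composeSet hS hT h₁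
  obtain ⟨u₁, hAB₁, hBC₁, e₁⟩ := mem_composeSet.mp h₁
  obtain ⟨u₂, hAB₂, hBC₂, e₂⟩ := mem_composeSet.mp h₂
  rcases List.prefix_or_prefix_or_diverge u₁ u₂ with h | h | ⟨w, x, y, r₁, r₂, hxy, rfl, rfl⟩
  · simpa [← e₁, ← e₂] using projAC_prefix h
  · simpa [← e₁, ← e₂, eq_comm] using projAC_prefix h
  · refine absurd ?_ hxy
    have hx : w ++ [x] <+: w ++ x :: r₁ := ⟨r₁, by simp⟩
    have hy : w ++ [y] <+: w ++ y :: r₂ := ⟨r₂, by simp⟩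
    by_cases hodd : Odd (projAB w).length ∨ Odd (projBC w).length
    · exact eq_of_prefix_of_odd hA hB hC hS hT hAB₁ hBC₁ hAB₂ hBC₂ hx hy hodd
    · simp only [not_or, Nat.not_odd_iff_even] at hodd
      exact eq_of_prefix_of_even hA hB hC hS hT hAB₁ hBC₁ hAB₂ hBC₂ hs e₁.symm e₂.symm hx hy
        hodd.1 hodd.2

end Determinism

section Totality

variable {A B C : Game} {S : Set (List (linHom A B).Move)} {T : Set (List (linHom B C).Move)}
  {u : List (A.Move ⊕ B.Move ⊕ C.Move)}

variable (S T) in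
def LeftToMove (u : List (A.Move ⊕ B.Move ⊕ C.Move)) : Prop :=
  AwaitsResponse (linHom A B) S (projAB u) ∧ projBC u ∈ T

variable (S T) in
def RightToMove (u : List (A.Move ⊕ B.Move ⊕ C.Move)) : Prop :=
  projAB u ∈ S ∧ AwaitsResponse (linHom B C) T (projBC u)

theorem LeftToMove.step (hS : IsStrategy (linHom A B) S) (hSt : IsTotal (linHom A B) S)
    (hT : IsStrategy (linHom B C) T) (hu : LeftToMove S T u) :
    (∃ a, projAB u ++ [.inr a] ∈ S) ∨ ∃ b, RightToMove S T (u ++ [.inr (.inl b)]) := by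
  obtain ⟨hAB, hBC⟩ := hu
  obtain ⟨b | a, hb⟩ := hSt.exists_append_mem hAB
  · have h₁ : Odd (projAB u).length := hAB.odd_length hS linHom_plays_altWith
    have h₂ : Even (projBC u).length := hT.even_length linHom_plays_altWith hBC
    have hplay : (linHom A B).plays (projAB u ++ [.inl b] : List (B.Move ⊕ A.Move)) := hS.1 _ hb
    have hlab : B.lab b = _ := linHom_lab_eq hplay
    have hBCplay := hT.1 _ hBC
    refine .inr ⟨b, by simp only [projAB_append, projAB_cons_B, projAB_nil]; exact hb, ?_,
      projBC u, hBC, .inr b, by simp only [projBC_append, projBC_cons_B, projBC_nil]; rfl⟩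
    simp only [projBC_append, projBC_cons_B, projBC_nil]
    refine linHom_plays_append_inr hBCplay (by rw [projR_projBC]; simpa using hplay.1) ?_ ?_
    · rw [hlab]
      simp only [Nat.even_iff, Nat.odd_iff] at h₁ h₂
      simp [h₁, h₂]
    · -- with no `C`-move yet, the plays of `B` and then of `A` are empty too
      intro hnil
      have hL := projR_projBC u ▸ hBCplay.2.2.2 hnil
      have hlen := length_projL_add_length_projR (projAB u)
      rw [hL, hAB.1.2.2.2 hL] at hlen
      simp only [List.length_nil, add_zero] at hlen
      simp [← hlen] at h₁
  · exact .inl ⟨a, hb⟩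

theorem RightToMove.step (hS : IsStrategy (linHom A B) S) (hT : IsStrategy (linHom B C) T)
    (hTt : IsTotal (linHom B C) T) (hu : RightToMove S T u) :
    (∃ c, projBC u ++ [.inl c] ∈ T) ∨ ∃ b, LeftToMove S T (u ++ [.inr (.inl b)]) := by
  obtain ⟨hAB, hBC⟩ := hu
  obtain ⟨c | b, hb⟩ := hTt.exists_append_mem hBC
  · exact .inl ⟨c, hb⟩
  · have h₁ : Even (projAB u).length := hS.even_length linHom_plays_altWith hAB
    have h₂ : Odd (projBC u).length := hBC.odd_length hT linHom_plays_altWith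
    have hplay : (linHom B C).plays (projBC u ++ [.inr b] : List (C.Move ⊕ B.Move)) := hT.1 _ hb
    have hlab : (!B.lab b) = _ := linHom_lab_eq hplay
    refine .inr ⟨b, ⟨?_, projAB u, hAB, .inl b,
      by simp only [projAB_append, projAB_cons_B, projAB_nil]; rfl⟩,
      by simp only [projBC_append, projBC_cons_B, projBC_nil]; exact hb⟩
    simp only [projAB_append, projAB_cons_B, projAB_nil]
    refine linHom_plays_append_inl (hS.1 _ hAB) (by simpa [projR_projBC] using hplay.2.1) ?_
    simp only [Nat.even_iff, Nat.odd_iff] at h₁ h₂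
    simpa [h₁, h₂] using hlab

/-- The internal ping-pong between `σ` and `τ` ends with a visible move, because each exchange
adds a move to the play of the bounded game `B`. -/
theorem exists_visible_extension (hS : IsStrategy (linHom A B) S)
    (hSt : IsTotal (linHom A B) S) (hT : IsStrategy (linHom B C) T)
    (hTt : IsTotal (linHom B C) T) {k : ℕ} (hk : ∀ s, B.plays s → s.length ≤ k) :
    ∀ (n : ℕ) (u : List (A.Move ⊕ B.Move ⊕ C.Move)), k < (projL (projAB u)).length + n →
      LeftToMove S T u ∨ RightToMove S T u →
      ∃ v m, projAB (u ++ v) ∈ S ∧ projBC (u ++ v) ∈ T ∧ projAC (u ++ v) = projAC u ++ [m]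
  | 0, u, hn, hu => by
    have hB : B.plays (projL (projAB u)) := by
      rcases hu with hu | hu
      exacts [hu.1.1.1, (hS.1 _ hu.1).1]
    exact absurd (hk _ hB) (by omega)
  | n + 1, u, hn, hu => by
    have ih := fun b ↦ exists_visible_extension hS hSt hT hTt hk n (u ++ [.inr (.inl b)])
      (by simp; omega)
    rcases hu with hu | hu
    · rcases hu.step hS hSt hT with ⟨a, ha⟩ | ⟨b, hb⟩
      · exact ⟨[.inl a], .inr a, by simp only [projAB_append, projAB_cons_A, projAB_nil]; exact ha,
          by simpa using hu.2, by simp⟩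
      · obtain ⟨v, m, h₁, h₂, h₃⟩ := ih b (.inr hb)
        exact ⟨.inr (.inl b) :: v, m, by simpa using h₁, by simpa using h₂, by simpa using h₃⟩
    · rcases hu.step hS hT hTt with ⟨c, hc⟩ | ⟨b, hb⟩
      · exact ⟨[.inr (.inr c)], .inl c, by simpa using hu.1,
          by simp only [projBC_append, projBC_cons_C, projBC_nil]; exact hc, by simp⟩
      · obtain ⟨v, m, h₁, h₂, h₃⟩ := ih b (.inl hb)
        exact ⟨.inr (.inl b) :: v, m, by simpa using h₁, by simpa using h₂, by simpa using h₃⟩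

theorem exists_toMove_of_plays_append (hA : A.WellformedNegative)
    (hS : IsStrategy (linHom A B) S) (hT : IsStrategy (linHom B C) T) (hAB : projAB u ∈ S)
    (hBC : projBC u ∈ T) {a : C.Move ⊕ A.Move}
    (ha : (linHom A C).plays (projAC u ++ [a] : List (C.Move ⊕ A.Move))) :
    ∃ x, projAC (u ++ [x]) = projAC u ++ [a] ∧
      (LeftToMove S T (u ++ [x]) ∨ RightToMove S T (u ++ [x])) := by
  have h₁ : Even (projAB u).length := hS.even_length linHom_plays_altWith hAB
  have h₂ : Even (projBC u).length := hT.even_length linHom_plays_altWith hBC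
  have hcount := length_projAB_add_length_projBC u
  have hlab := linHom_lab_eq ha
  simp only [Nat.even_iff] at h₁ h₂
  rcases a with c | a
  · refine ⟨.inr (.inr c), by simp, .inr ⟨by simpa using hAB, ?_, projBC u, hBC, .inl c,
      by simp only [projBC_append, projBC_cons_C, projBC_nil]; rfl⟩⟩
    simp only [projBC_append, projBC_cons_C, projBC_nil]
    refine linHom_plays_append_inl (hT.1 _ hBC) (by simpa [projL_projAC] using ha.1) ?_
    rw [linHom_lab_inl] at hlab
    rw [hlab, decide_eq_decide]
    omega
  · refine ⟨.inl a, by simp, .inl ⟨⟨?_, projAB u, hAB, .inr a,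
      by simp only [projAB_append, projAB_cons_A, projAB_nil]; rfl⟩, by simpa using hBC⟩⟩
    simp only [projAB_append, projAB_cons_A, projAB_nil]
    refine linHom_plays_append_inr (hS.1 _ hAB) (by simpa [projR_projAC] using ha.2.1) ?_ ?_
    · rw [linHom_lab_inr] at hlab
      rw [hlab, decide_eq_decide]
      omega
    · -- the `C`-play has odd length, so the `B`-play, of the same parity, is nonempty
      have hCodd := odd_length_projL_of_linHom_plays_append_inr hA ha
      have hlen := length_projL_add_length_projR (projBC u)
      rw [projL_projAC, Nat.odd_iff] at hCodd
      rw [projR_projBC] at hlen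
      have hBodd : (projL (projAB u)).length % 2 = 1 := by omega
      intro hnil
      simp [hnil] at hBodd

end Totality

theorem compose_total_of_bounded_general (A B C : Game)
    (hAw : A.Wellformed) (hBw : B.Wellformed) (hCw : C.Wellformed)
    (hA : A.Negative) (hB : B.Negative) (hC : C.Negative)
    (hBb : B.Bounded)
    (S : Set (List (linHom A B).Move)) (T : Set (List (linHom B C).Move))
    (hS : IsStrategy (linHom A B) S) (hSt : IsTotal (linHom A B) S)
    (hT : IsStrategy (linHom B C) T) (hTt : IsTotal (linHom B C) T) :
    IsStrategy (linHom A C) (composeSet A B C S T) ∧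
    IsTotal (linHom A C) (composeSet A B C S T) := by
  have hA' : A.WellformedNegative := ⟨hAw, hA⟩
  have hB' : B.WellformedNegative := ⟨hBw, hB⟩
  have hC' : C.WellformedNegative := ⟨hCw, hC⟩
  have hnil : [] ∈ composeSet A B C S T :=
    ⟨[], hS.nil_mem linHom_plays_altWith hSt.1, hT.nil_mem linHom_plays_altWith hTt.1, rfl⟩
  refine ⟨⟨?_, fun s m h => lab_eq_true_of_mem_composeSet hA' hB' hC' hS hT h,
    fun s a b => composeSet_mem_of_append_pair hA' hB' hC' hS hT,
    fun s m₁ m₂ => composeSet_deterministic hA' hB' hC' hS hT,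
    fun h => absurd hnil (h ▸ Set.notMem_empty _), fun _ => rfl⟩, ⟨_, hnil⟩, ?_⟩
  · rintro s ⟨u, hAB, hBC, rfl⟩
    exact (IsInteraction.of_mem hS hT hAB hBC).plays_projAC hA' hB' hC'
  · obtain ⟨k, hk⟩ := hBb
    rintro s hs a ha
    obtain ⟨u, hAB, hBC, rfl⟩ := mem_composeSet.mp hs
    obtain ⟨x, hx, hux⟩ := exists_toMove_of_plays_append hA' hS hT hAB hBC ha
    obtain ⟨v, m, hv⟩ := exists_visible_extension hS hSt hT hTt hk (k + 1) (u ++ [x])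
      (by omega) hux
    refine ⟨m, mem_composeSet.mpr ⟨u ++ [x] ++ v, hv.1, hv.2.1, ?_⟩⟩
    rw [hv.2.2, hx, List.append_assoc]
    rfl

/-- if `A`, `B`, `C` are bounded negative games and `σ : A ⊸ B`,
`τ : B ⊸ C` are total strategies, then the composite `τ ∘ σ` (parallel
composition plus hiding) is a total strategy on `A ⊸ C`. -/
theorem compose_total_of_bounded (A B C : Game)
    (hAw : A.Wellformed) (hBw : B.Wellformed) (hCw : C.Wellformed)
    (hA : A.Negative) (hB : B.Negative) (hC : C.Negative)
    (hAb : A.Bounded) (hBb : B.Bounded) (hCb : C.Bounded)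
    (S : Set (List (linHom A B).Move)) (T : Set (List (linHom B C).Move))
    (hS : IsStrategy (linHom A B) S) (hSt : IsTotal (linHom A B) S)
    (hT : IsStrategy (linHom B C) T) (hTt : IsTotal (linHom B C) T) :
    IsStrategy (linHom A C) (composeSet A B C S T) ∧
    IsTotal (linHom A C) (composeSet A B C S T) :=
  compose_total_of_bounded_general A B C hAw hBw hCw hA hB hC hBb S T hS hSt hT hTt

end WS
end

section
/- In a distributive decomposable sequoidal closed category, the map dist⁰_⊸ : (A ⊸ I) → I given by af = (dec⁰)⁻¹ ∘ t is an isomorphism, with inverse Λ(runit_⊗ ∘ (id ⊗ af)). -/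
/-!
Affineness makes `I ≅ 1` terminal, and currying `C(X, A ⊸ I) ≃ C(X ⊗ A, I)` transports
terminality to `A ⊸ I`. Both composites are then endomorphisms of terminal objects.
-/

open CategoryTheory MonoidalCategory

universe u v

namespace WS

variable (C : Type u) [Category.{v} C] [MonoidalCategory C] [SymmetricCategory C]

/-- A (distributive, decomposable) sequoidal closed category, presented over a
symmetric monoidal category `C`: a wide subcategory `C_s` of strict morphisms
(such that `J : C_s → C` reflects isomorphisms), a right action `⊘` of `C` on
`C_s` with unit and associativity isomorphisms, a natural transformation
`wk : J(−) ⊗ − ⇒ J(− ⊘ −)`, a monoidal closed structure `⊸` with currying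
bijection `adj`, and the sequoidal-closure condition that `f ↦ Λ(f ∘ wk)` is a
bijection `C_s(B ⊘ A, X) ≅ C_s(B, A ⊸ X)`, with a chosen strict evaluation
`apps` satisfying `app = apps ∘ wk`. -/
structure SeqCat where
  strict : ∀ {X Y : C}, (X ⟶ Y) → Prop
  strict_id : ∀ X : C, strict (𝟙 X)
  strict_comp : ∀ {X Y Z : C} {f : X ⟶ Y} {g : Y ⟶ Z}, strict f → strict g → strict (f ≫ g)
  strict_inv : ∀ {X Y : C} (f : X ⟶ Y) (g : Y ⟶ X),
    strict f → f ≫ g = 𝟙 X → g ≫ f = 𝟙 Y → strict g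
  seq : C → C → C
  seqMap : ∀ {A B X Y : C} (f : A ⟶ B), strict f → (X ⟶ Y) → (seq A X ⟶ seq B Y)
  seqMap_strict : ∀ {A B X Y : C} (f : A ⟶ B) (hf : strict f) (g : X ⟶ Y),
    strict (seqMap f hf g)
  seqMap_id : ∀ A X : C, seqMap (𝟙 A) (strict_id A) (𝟙 X) = 𝟙 (seq A X)
  seqMap_comp : ∀ {A B B' X Y Y' : C} (f : A ⟶ B) (hf : strict f) (f' : B ⟶ B')
    (hf' : strict f') (g : X ⟶ Y) (g' : Y ⟶ Y'),
    seqMap (f ≫ f') (strict_comp hf hf') (g ≫ g') = seqMap f hf g ≫ seqMap f' hf' g'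
  unitSeq : ∀ A : C, seq A (𝟙_ C) ≅ A
  unitSeq_strict : ∀ A : C, strict (unitSeq A).hom
  unitSeq_strict_inv : ∀ A : C, strict (unitSeq A).inv
  pasc : ∀ A B X : C, seq A (B ⊗ X) ≅ seq (seq A B) X
  pasc_strict : ∀ A B X : C, strict (pasc A B X).hom
  pasc_strict_inv : ∀ A B X : C, strict (pasc A B X).inv
  wk : ∀ A X : C, A ⊗ X ⟶ seq A X
  wk_strict : ∀ A X : C, strict (wk A X)
  wk_natural : ∀ {A B X Y : C} (f : A ⟶ B) (hf : strict f) (g : X ⟶ Y),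
    (f ⊗ₘ g) ≫ wk B Y = wk A X ≫ seqMap f hf g
  hom : C → C → C
  homMap : ∀ {A' A X X' : C}, (A' ⟶ A) → (X ⟶ X') → (hom A X ⟶ hom A' X')
  homMap_id : ∀ A X : C, homMap (𝟙 A) (𝟙 X) = 𝟙 (hom A X)
  homMap_comp : ∀ {A'' A' A X X' X'' : C} (e : A'' ⟶ A') (e' : A' ⟶ A)
    (g : X ⟶ X') (g' : X' ⟶ X''),
    homMap (e ≫ e') (g ≫ g') = homMap e' g ≫ homMap e g'
  adj : ∀ A B X : C, (B ⊗ A ⟶ X) ≃ (B ⟶ hom A X)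
  adj_natural_left : ∀ {A B B' X : C} (g : B' ⟶ B) (f : B ⊗ A ⟶ X),
    adj A B' X ((g ⊗ₘ 𝟙 A) ≫ f) = g ≫ adj A B X f
  adj_natural : ∀ {A' A B X X' : C} (e : A' ⟶ A) (h : X ⟶ X') (f : B ⊗ A ⟶ X),
    adj A' B X' ((𝟙 B ⊗ₘ e) ≫ f ≫ h) = adj A B X f ≫ homMap e h
  seqClosed_strict : ∀ {A B X : C} (f : seq B A ⟶ X), strict f →
    strict (adj A B X (wk B A ≫ f))
  seqClosed_bij : ∀ (A B X : C) (g : B ⟶ hom A X), strict g →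
    ∃! f : seq B A ⟶ X, strict f ∧ adj A B X (wk B A ≫ f) = g
  apps : ∀ A X : C, seq (hom A X) A ⟶ X
  apps_strict : ∀ A X : C, strict (apps A X)
  apps_spec : ∀ A X : C, wk (hom A X) A ≫ apps A X = (adj A (hom A X) X).symm (𝟙 (hom A X))

variable {C}

/-- Evaluation `app : (A ⊸ X) ⊗ A ⟶ X`. -/
def SeqCat.app (S : SeqCat C) (A X : C) : S.hom A X ⊗ A ⟶ X :=
  (S.adj A (S.hom A X) X).symm (𝟙 (S.hom A X))

/-- The canonical map `unit_⊸ : (I ⊸ X) ⟶ X`, i.e. `app ∘ runit_⊗⁻¹`. -/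
def SeqCat.unitHom (S : SeqCat C) (X : C) : S.hom (𝟙_ C) X ⟶ X :=
  (ρ_ (S.hom (𝟙_ C) X)).inv ≫ S.app (𝟙_ C) X

/-- The canonical map `pasc_⊸ : ((A ⊗ B) ⊸ X) ⟶ (A ⊸ (B ⊸ X))`, i.e.
`Λ(Λ(app ∘ assoc))`. -/
def SeqCat.pascHom (S : SeqCat C) (A B X : C) :
    S.hom (A ⊗ B) X ⟶ S.hom A (S.hom B X) :=
  S.adj A (S.hom (A ⊗ B) X) (S.hom B X)
    (S.adj B (S.hom (A ⊗ B) X ⊗ A) X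
      ((α_ (S.hom (A ⊗ B) X) A B).hom ≫ S.app (A ⊗ B) X))


/-- A Cartesian, decomposable, distributive sequoidal closed category: `C_s` has
finite products preserved by `J` (so `1` is terminal in `C` and the monoidal
structure is affine via `dec⁰ : I ≅ 1`), the decomposition
`dec = ⟨wk, wk ∘ sym⟩ : A ⊗ B ⟶ (A ⊘ B) × (B ⊘ A)` and the distributivities
`dist : (A × B) ⊘ X ⟶ (A ⊘ X) × (B ⊘ X)` and `dist₀ : 1 ⊘ X ⟶ 1` are
isomorphisms. -/
structure SeqCatProd (C : Type u) [Category.{v} C] [MonoidalCategory C]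
    [SymmetricCategory C] extends SeqCat C where
  term : C
  tmap : ∀ X : C, X ⟶ term
  tmap_strict : ∀ X : C, strict (tmap X)
  tmap_uniq : ∀ {X : C} (f g : X ⟶ term), f = g
  prod : C → C → C
  fst : ∀ X Y : C, prod X Y ⟶ X
  snd : ∀ X Y : C, prod X Y ⟶ Y
  fst_strict : ∀ X Y : C, strict (fst X Y)
  snd_strict : ∀ X Y : C, strict (snd X Y)
  lift : ∀ {Z X Y : C}, (Z ⟶ X) → (Z ⟶ Y) → (Z ⟶ prod X Y)
  lift_fst : ∀ {Z X Y : C} (f : Z ⟶ X) (g : Z ⟶ Y), lift f g ≫ fst X Y = f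
  lift_snd : ∀ {Z X Y : C} (f : Z ⟶ X) (g : Z ⟶ Y), lift f g ≫ snd X Y = g
  lift_uniq : ∀ {Z X Y : C} (h h' : Z ⟶ prod X Y),
    h ≫ fst X Y = h' ≫ fst X Y → h ≫ snd X Y = h' ≫ snd X Y → h = h'
  lift_strict : ∀ {Z X Y : C} (f : Z ⟶ X) (g : Z ⟶ Y),
    strict f → strict g → strict (lift f g)
  dec0_iso : IsIso (tmap (𝟙_ C))
  dec_iso : ∀ A B : C, IsIso (lift (wk A B) ((β_ A B).hom ≫ wk B A))
  dist_iso : ∀ A B X : C,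
    IsIso (lift (seqMap (fst A B) (fst_strict A B) (𝟙 X))
                (seqMap (snd A B) (snd_strict A B) (𝟙 X)))
  dist0_iso : ∀ X : C, IsIso (tmap (seq term X))

variable {C : Type u} [Category.{v} C] [MonoidalCategory C] [SymmetricCategory C]

/-- `af : A ⟶ I`, the unique affine map `(dec⁰)⁻¹ ∘ t_A`. -/
noncomputable def SeqCatProd.af (S : SeqCatProd C) (A : C) : A ⟶ 𝟙_ C := by
  haveI := S.dec0_iso
  exact S.tmap A ≫ inv (S.tmap (𝟙_ C))

open Limits

def SeqCatProd.isTerminalTerm (S : SeqCatProd C) : IsTerminal S.term :=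
  IsTerminal.ofUniqueHom S.tmap fun _ _ => S.tmap_uniq _ _

noncomputable def SeqCatProd.isTerminalUnit (S : SeqCatProd C) : IsTerminal (𝟙_ C) :=
  haveI := S.dec0_iso
  S.isTerminalTerm.ofIso (asIso (S.tmap (𝟙_ C))).symm

def SeqCat.isTerminalHom (S : SeqCat C) (A : C) {X : C} (hX : IsTerminal X) :
    IsTerminal (S.hom A X) :=
  IsTerminal.ofUniqueHom (fun Y => S.adj A Y X (hX.from _))
    fun Y m => (S.adj A Y X).symm.injective (by simpa using hX.hom_ext _ _)

/-- in a distributive decomposable sequoidal closed category, the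
map `dist⁰_⊸ = af : (A ⊸ I) ⟶ I` is an isomorphism with inverse
`Λ(runit_⊗ ∘ (id ⊗ af))`. -/
theorem hom_into_unit_iso (S : SeqCatProd C) (A : C) :
    S.af (S.hom A (𝟙_ C)) ≫
        S.adj A (𝟙_ C) (𝟙_ C) ((𝟙 (𝟙_ C) ⊗ₘ S.af A) ≫ (ρ_ (𝟙_ C)).hom)
      = 𝟙 (S.hom A (𝟙_ C)) ∧
    S.adj A (𝟙_ C) (𝟙_ C) ((𝟙 (𝟙_ C) ⊗ₘ S.af A) ≫ (ρ_ (𝟙_ C)).hom) ≫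
        S.af (S.hom A (𝟙_ C))
      = 𝟙 (𝟙_ C) :=
  ⟨(S.isTerminalHom A S.isTerminalUnit).hom_ext _ _, S.isTerminalUnit.hom_ext _ _⟩

end WS
end

section
/- Hom-sets of the cpo-enriched category G of games and strategies are algebraic domains under strategy inclusion: every strategy is the directed supremum of its finite (compact) sub-strategies, directed suprema of strategies exist and are computed as unions, and composition of strategies is continuous with respect to these suprema. -/
namespace WS

/-!
Each strategy axiom constrains at most two plays at a time, and any two plays of a directed
union already lie in a common member, so directed unions of strategies are strategies. A play
`s ∈ S` lies in the finite sub-strategy of its prefixes in `S`, and a finite set inside a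
directed union lies in one member. Composition is defined by an existential over single plays
of its arguments, so it commutes with arbitrary unions in each argument.
-/

section Algebraic

variable {G : Game}

theorem IsStrategy.sUnion {D : Set (Set (List G.Move))} (hne : D.Nonempty)
    (hdir : DirectedOn (· ⊆ ·) D) (hD : ∀ S ∈ D, IsStrategy G S) : IsStrategy G (⋃₀ D) := by
  refine ⟨?_, ?_, ?_, ?_, ?_, ?_⟩
  · rintro s ⟨S, hS, hs⟩
    exact (hD S hS).1 s hs
  · rintro s a ⟨S, hS, hs⟩
    exact (hD S hS).2.1 s a hs
  · rintro s a b ⟨S, hS, hs⟩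
    exact ⟨S, hS, (hD S hS).2.2.1 s a b hs⟩
  · rintro s a b ⟨S₁, hS₁, h₁⟩ ⟨S₂, hS₂, h₂⟩
    obtain ⟨S, hS, h₁S, h₂S⟩ := hdir S₁ hS₁ S₂ hS₂
    exact (hD S hS).2.2.2.1 s a b (h₁S h₁) (h₂S h₂)
  · intro hempty
    obtain ⟨S, hS⟩ := hne
    exact (hD S hS).2.2.2.2.1 (Set.subset_eq_empty (Set.subset_sUnion_of_mem hS) hempty)
  · rintro ⟨S, hS, h⟩
    exact (hD S hS).2.2.2.2.2 h

theorem IsStrategy.inter_prefixes {S : Set (List G.Move)} (hS : IsStrategy G S)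
    {s : List G.Move} (hs : s ∈ S) : IsStrategy G (S ∩ {t | t <+: s}) := by
  obtain ⟨hplays, hlab, hclosed, hdet, hempty, hnil⟩ := hS
  refine ⟨?_, ?_, ?_, ?_, ?_, ?_⟩
  · exact fun t ht => hplays t ht.1
  · exact fun t a ht => hlab t a ht.1
  · rintro t a b ⟨ht, hts⟩
    exact ⟨hclosed t a b ht, (t.prefix_append [a, b]).trans hts⟩
  · rintro t a b ⟨ha, _⟩ ⟨hb, _⟩
    exact hdet t a b ha hb
  · exact fun h => (Set.eq_empty_iff_forall_notMem.1 h s ⟨hs, List.prefix_refl s⟩).elim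
  · exact fun h => hnil h.1

theorem finite_prefixes {α : Type*} (s : List α) : {t | t <+: s}.Finite :=
  (List.finite_toSet s.inits).subset fun t ht => (List.mem_inits t s).2 ht

theorem IsStrategy.eq_sUnion_finite {S : Set (List G.Move)} (hS : IsStrategy G S) :
    S = ⋃₀ {T | IsStrategy G T ∧ T ⊆ S ∧ T.Finite} := by
  refine (Set.sUnion_subset fun T hT => hT.2.1).antisymm' fun s hs => ?_
  exact ⟨S ∩ {t | t <+: s}, ⟨hS.inter_prefixes hs, Set.inter_subset_left,
    (finite_prefixes s).inter_of_right S⟩, hs, List.prefix_refl s⟩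

end Algebraic

section Continuity

variable (A B C : Game)

theorem composeSet_sUnion_right (S : Set (List (linHom A B).Move))
    (D : Set (Set (List (linHom B C).Move))) :
    composeSet A B C S (⋃₀ D) = ⋃ T ∈ D, composeSet A B C S T := by
  ext t
  simp only [composeSet, Set.mem_iUnion, Set.mem_ofPred_eq, exists_prop]
  constructor
  · rintro ⟨u, hS, ⟨T, hT, hu⟩, rfl⟩
    exact ⟨T, hT, u, hS, hu, rfl⟩
  · rintro ⟨T, hT, u, hS, hu, rfl⟩
    exact ⟨u, hS, ⟨T, hT, hu⟩, rfl⟩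

theorem composeSet_sUnion_left (D : Set (Set (List (linHom A B).Move)))
    (T : Set (List (linHom B C).Move)) :
    composeSet A B C (⋃₀ D) T = ⋃ S ∈ D, composeSet A B C S T := by
  ext t
  simp only [composeSet, Set.mem_iUnion, Set.mem_ofPred_eq, exists_prop]
  constructor
  · rintro ⟨u, ⟨S, hS, hu⟩, hT, rfl⟩
    exact ⟨S, hS, u, hu, hT, rfl⟩
  · rintro ⟨S, hS, u, hu, hT, rfl⟩
    exact ⟨u, ⟨S, hS, hu⟩, hT, rfl⟩

end Continuity

/-- hom-sets of the category of games and strategies are algebraic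
domains under inclusion: directed suprema of strategies are unions, every
strategy is the directed supremum of its finite sub-strategies, finite
strategies are compact, and composition is continuous. -/
theorem strategies_algebraic_and_composition_continuous :
    (∀ (G : Game) (D : Set (Set (List G.Move))), D.Nonempty →
        DirectedOn (· ⊆ ·) D → (∀ S ∈ D, IsStrategy G S) → IsStrategy G (⋃₀ D)) ∧
    (∀ (G : Game) (S : Set (List G.Move)), IsStrategy G S →
        S = ⋃₀ {T | IsStrategy G T ∧ T ⊆ S ∧ T.Finite}) ∧
    (∀ (G : Game) (S : Set (List G.Move)), IsStrategy G S → S.Finite →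
        ∀ D : Set (Set (List G.Move)), D.Nonempty → DirectedOn (· ⊆ ·) D →
          (∀ T ∈ D, IsStrategy G T) → S ⊆ ⋃₀ D → ∃ T ∈ D, S ⊆ T) ∧
    (∀ (A B C : Game), A.Wellformed → B.Wellformed → C.Wellformed →
        A.Negative → B.Negative → C.Negative →
        ∀ S : Set (List (linHom A B).Move), IsStrategy (linHom A B) S →
          ∀ D : Set (Set (List (linHom B C).Move)), D.Nonempty →
            DirectedOn (· ⊆ ·) D → (∀ T ∈ D, IsStrategy (linHom B C) T) →
            composeSet A B C S (⋃₀ D) = ⋃ T ∈ D, composeSet A B C S T) ∧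
    (∀ (A B C : Game), A.Wellformed → B.Wellformed → C.Wellformed →
        A.Negative → B.Negative → C.Negative →
        ∀ T : Set (List (linHom B C).Move), IsStrategy (linHom B C) T →
          ∀ D : Set (Set (List (linHom A B).Move)), D.Nonempty →
            DirectedOn (· ⊆ ·) D → (∀ S ∈ D, IsStrategy (linHom A B) S) →
            composeSet A B C (⋃₀ D) T = ⋃ S ∈ D, composeSet A B C S T) :=
  ⟨fun _ _ hne hdir hD => IsStrategy.sUnion hne hdir hD,
    fun _ _ hS => hS.eq_sUnion_finite,
    fun _ _ _ hfin _ hne hdir _ hsub =>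
      hdir.exists_mem_subset_of_finite_of_subset_sUnion hne hfin hsub,
    fun A B C _ _ _ _ _ _ S _ D _ _ _ => composeSet_sUnion_right A B C S D,
    fun A B C _ _ _ _ _ _ T _ D _ _ _ => composeSet_sUnion_left A B C D T⟩

end WS
end
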